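/- Let n ≥ 1 and let a : Fin n → Fin n → Fin n → ℂ (written a^k_{ij}, with superscript the first argument). Define vectors Q^i_j ∈ ℂ^n by (Q^i_j)_k = a^i_{kj}. Then the following two conditions hold simultaneously: (A) for all i, p, j: Σ_k a^k_{ij} · conj(a^k_{pj}) = δ_{ip}, and (B) for all k, i, p: Σ_j a^k_{ij} · conj(a^k_{pj}) = δ_{ip}, if and only if the n × n array Q = ((Q^i_j)) is a quantum Latin square, i.e., for every fixed j the family (Q^i_j)_{i} is an orthonormal basis of ℂ^n and for every fixed i the family (Q^i_j)_{j} is an orthonormal basis of ℂ^n. -/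

import Mathlib

/-!
For fixed `j`, condition (A) says that the columns of the square matrix `(a^k_{ij})_{k,i}` are
orthonormal, while orthonormality of the `j`-th column of `Q` says that its rows are; likewise (B)
for fixed `k` and the `k`-th row of `Q`, with the matrix `(a^k_{ij})_{j,i}`. For a square matrix
`Mᴴ * M = 1 ↔ M * Mᴴ = 1`, and `n` orthonormal vectors in `ℂ^n` always form a basis.
-/

open scoped ComplexConjugate

/-- A family of `n` vectors in `ℂ^n` is an orthonormal basis. -/
def IsOrthonormalBasisFamily (n : ℕ) (v : Fin n → EuclideanSpace ℂ (Fin n)) : Prop :=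
  ∃ b : OrthonormalBasis (Fin n) ℂ (EuclideanSpace ℂ (Fin n)), ⇑b = v

theorem isOrthonormalBasisFamily_iff_orthonormal {n : ℕ}
    (v : Fin n → EuclideanSpace ℂ (Fin n)) :
    IsOrthonormalBasisFamily n v ↔ Orthonormal ℂ v := by
  refine ⟨fun ⟨b, hb⟩ => hb ▸ b.orthonormal, fun hv => ?_⟩
  have hspan := hv.linearIndependent.span_eq_top_of_card_eq_finrank' (by simp)
  exact ⟨.mk hv hspan.ge, OrthonormalBasis.coe_mk hv _⟩

/-- A square family of vectors is orthonormal iff the transposed family is. -/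
theorem EuclideanSpace.orthonormal_iff_sum_mul_conj {ι 𝕜 : Type*} [Fintype ι] [DecidableEq ι]
    [RCLike 𝕜] (v : ι → EuclideanSpace 𝕜 ι) :
    Orthonormal 𝕜 v ↔ ∀ i p, ∑ k, v k i * conj (v k p) = if i = p then 1 else 0 := by
  let N : Matrix ι ι 𝕜 := Matrix.of fun i k => v k i
  have entries (X : Matrix ι ι 𝕜) : X = 1 ↔ ∀ i p, X i p = if i = p then 1 else 0 := by
    simp only [← Matrix.ext_iff, Matrix.one_apply]
  have cols : Orthonormal 𝕜 v ↔ N.conjTranspose * N = 1 := by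
    simp [entries, orthonormal_iff_ite, Matrix.mul_apply, PiLp.inner_apply, N, mul_comm]
  have rows : N * N.conjTranspose = 1 ↔
      ∀ i p, ∑ k, v k i * conj (v k p) = if i = p then 1 else 0 := by
    simp [entries, Matrix.mul_apply, N]
  rw [cols, mul_eq_one_comm, rows]

theorem stmt_1_general (n : ℕ) (a : Fin n → Fin n → Fin n → ℂ)
    (Q : Fin n → Fin n → EuclideanSpace ℂ (Fin n))
    (hQ : ∀ i j k, Q i j k = a i k j) :
    ((∀ i p j, ∑ k, a k i j * (starRingEnd ℂ) (a k p j) =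
        if i = p then 1 else 0) ∧
     (∀ k i p, ∑ j, a k i j * (starRingEnd ℂ) (a k p j) =
        if i = p then 1 else 0)) ↔
    ((∀ j, IsOrthonormalBasisFamily n (fun i => Q i j)) ∧
     (∀ i, IsOrthonormalBasisFamily n (fun j => Q i j))) := by
  simp only [isOrthonormalBasisFamily_iff_orthonormal,
    EuclideanSpace.orthonormal_iff_sum_mul_conj, hQ]
  exact and_congr_left' ⟨fun h j i p => h i p j, fun h i p j => h j i p⟩

/-- for `a : Fin n → Fin n → Fin n → ℂ` (written `a^k_{ij} = a k i j`,
superscript first), with vectors `Q^i_j ∈ ℂ^n` given by `(Q^i_j)_k = a^i_{kj}`,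
the conditions (A) `∀ i p j, Σ_k a^k_{ij} conj(a^k_{pj}) = δ_{ip}` and
(B) `∀ k i p, Σ_j a^k_{ij} conj(a^k_{pj}) = δ_{ip}` hold simultaneously iff
`Q` is a quantum Latin square (each row and each column of `Q` is an orthonormal
basis of `ℂ^n`). -/
theorem stmt_1 (n : ℕ) (hn : 1 ≤ n) (a : Fin n → Fin n → Fin n → ℂ)
    (Q : Fin n → Fin n → EuclideanSpace ℂ (Fin n))
    (hQ : ∀ i j k, Q i j k = a i k j) :
    ((∀ i p j, ∑ k, a k i j * (starRingEnd ℂ) (a k p j) =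
        if i = p then 1 else 0) ∧
     (∀ k i p, ∑ j, a k i j * (starRingEnd ℂ) (a k p j) =
        if i = p then 1 else 0)) ↔
    ((∀ j, IsOrthonormalBasisFamily n (fun i => Q i j)) ∧
     (∀ i, IsOrthonormalBasisFamily n (fun j => Q i j))) :=
  stmt_1_general n a Q hQ
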